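/- Let Q ⊆ ℂ be an unshielded continuum with Riemann map Ψ as in the context, and let A, B ⊆ Q. Suppose K₁ is a ray-compactum which ray-separates A and B, and K₂ is a ray-compactum disjoint from B which ray-separates A and K₁. Then K₂ ray-separates A and B. -/

import Mathlib

open Set Filter Topology Metric

noncomputable section


/-- The point `e^{2πiα}` on the unit circle corresponding to an angle `α ∈ ℝ/ℤ`. -/
def circlePoint (α : AddCircle (1 : ℝ)) : ℂ := (AddCircle.toCircle α : ℂ)

/-- The basin of infinity of a compact set `Q ⊆ ℂ`: the union of the unbounded
connected components of `ℂ ∖ Q` (for `Q` a continuum there is exactly one). -/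
def basin (Q : Set ℂ) : Set ℂ :=
  {z | z ∉ Q ∧ ¬ Bornology.IsBounded (connectedComponentIn Qᶜ z)}

/-- `Q` is an unshielded continuum: a compact connected nonempty subset of `ℂ`
which coincides with the boundary of its basin of infinity. -/
def Unshielded (Q : Set ℂ) : Prop :=
  IsCompact Q ∧ IsConnected Q ∧ Q = frontier (basin Q)

/-- `Ψ` is a Riemann map for the basin of infinity of `Q`: a holomorphic bijection
from `{z : |z| > 1}` onto the basin of infinity. -/
def RiemannMap (Q : Set ℂ) (Ψ : ℂ → ℂ) : Prop :=
  DifferentiableOn ℂ Ψ {z | 1 < ‖z‖} ∧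
  Set.BijOn Ψ {z | 1 < ‖z‖} (basin Q)

/-- The impression of the external angle `α`. -/
def impression (Ψ : ℂ → ℂ) (α : AddCircle (1 : ℝ)) : Set ℂ :=
  {w | ∃ z : ℕ → ℂ, (∀ n, 1 < ‖z n‖) ∧
        Tendsto z atTop (𝓝 (circlePoint α)) ∧
        Tendsto (fun n => Ψ (z n)) atTop (𝓝 w)}

/-- The external ray of angle `α`. -/
def extRay (Ψ : ℂ → ℂ) (α : AddCircle (1 : ℝ)) : Set ℂ :=
  Ψ '' {z | ∃ r : ℝ, 1 < r ∧ z = (r : ℂ) * circlePoint α}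

/-- The principal set of the external angle `α`. -/
def principalSet (Ψ : ℂ → ℂ) (α : AddCircle (1 : ℝ)) : Set ℂ :=
  closure (extRay Ψ α) \ extRay Ψ α

/-- A closed equivalence relation (its graph, within `Q × Q`, is closed) such that
every impression is contained in a single equivalence class. -/
structure IsClosedEquivRespImp (Q : Set ℂ) (Ψ : ℂ → ℂ) (r : ℂ → ℂ → Prop) : Prop where
  equivalence : Equivalence r
  closedGraph : IsClosed {p : ℂ × ℂ | p.1 ∈ Q ∧ p.2 ∈ Q ∧ r p.1 p.2}
  resp : ∀ α : AddCircle (1 : ℝ), ∀ x ∈ impression Ψ α, ∀ y ∈ impression Ψ α, r x y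

/-- The relation `≈₀`: the intersection of all closed equivalence relations on `Q`
in which every impression is contained in a single class. -/
def finestRel (Q : Set ℂ) (Ψ : ℂ → ℂ) (x y : ℂ) : Prop :=
  ∀ r : ℂ → ℂ → Prop, IsClosedEquivRespImp Q Ψ r → r x y

/-- The partition `𝒟` of `Q` whose elements are the connected components of the
`≈₀`-classes; its elements are the fibers of the finest monotone map of `Q`
onto a locally connected continuum. -/
def finestPartition (Q : Set ℂ) (Ψ : ℂ → ℂ) : Set (Set ℂ) :=
  {D | ∃ x ∈ Q, D = connectedComponentIn {y ∈ Q | finestRel Q Ψ x y} x}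

/-- A ray-compactum in `Q`: a compact subset of `Q` together with a closed set of
angles whose principal sets it contains and in the union of whose impressions
it is contained. -/
structure RayCompactum (Q : Set ℂ) (Ψ : ℂ → ℂ) where
  carrier : Set ℂ
  angles : Set (AddCircle (1 : ℝ))
  carrier_subset : carrier ⊆ Q
  isCompact_carrier : IsCompact carrier
  isClosed_angles : IsClosed angles
  principal_subset : ∀ θ ∈ angles, principalSet Ψ θ ⊆ carrier
  subset_impressions : carrier ⊆ ⋃ θ ∈ angles, impression Ψ θ

/-- `C̃ = C ∪ ⋃_{θ ∈ Θ(C)} R_θ`. -/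
def RayCompactum.tilde {Q : Set ℂ} {Ψ : ℂ → ℂ} (C : RayCompactum Q Ψ) : Set ℂ :=
  C.carrier ∪ ⋃ θ ∈ C.angles, extRay Ψ θ

/-- A ray-compactum `C` ray-separates the sets `A` and `B`. -/
def RaySeparates {Q : Set ℂ} {Ψ : ℂ → ℂ} (C : RayCompactum Q Ψ) (A B : Set ℂ) : Prop :=
  C.carrier ∩ (A ∪ B) = ∅ ∧
  ∀ z ∈ closure (basin Q) \ C.tilde,
    ¬ ((connectedComponentIn (closure (basin Q) \ C.tilde) z ∩ A).Nonempty ∧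
       (connectedComponentIn (closure (basin Q) \ C.tilde) z ∩ B).Nonempty)

/-- A ray-compactum `C` ray-separates a set `X` if it ray-separates some
pair of (distinct) points of `X`. -/
def RaySeparatesSet {Q : Set ℂ} {Ψ : ℂ → ℂ} (C : RayCompactum Q Ψ) (X : Set ℂ) : Prop :=
  ∃ x ∈ X, ∃ y ∈ X, x ≠ y ∧ RaySeparates C {x} {y}

/-- A well-slicing family for a continuum `X ⊆ Q`. -/
structure IsWellSlicing {Q : Set ℂ} {Ψ : ℂ → ℂ}
    (𝒞 : Set (RayCompactum Q Ψ)) (X : Set ℂ) : Prop where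
  nontrivial : ∃ C₁ ∈ 𝒞, ∃ C₂ ∈ 𝒞, C₁ ≠ C₂
  pairwiseDisjoint : ∀ C₁ ∈ 𝒞, ∀ C₂ ∈ 𝒞, C₁ ≠ C₂ → Disjoint C₁.carrier C₂.carrier
  separates : ∀ C ∈ 𝒞, RaySeparatesSet C X
  middle : ∀ C₁ ∈ 𝒞, ∀ C₂ ∈ 𝒞, C₁ ≠ C₂ → ∃ C₃ ∈ 𝒞, RaySeparates C₃ C₁.carrier C₂.carrier

/-!
Let `U` be a component of `closure (basin Q) \ K̃₂` meeting `A`. Since `K₂` separates `A` from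
`K₁`, `U` misses `K₁`. It also misses every ray `R_α` of `K₁`: such a ray is connected and disjoint
from `K̃₂` (rays are disjoint from `Q` and from each other), so if it met `U` it would lie in `U`,
and so would its principal set, which is contained in `K₁`, as `U` is closed in
`closure (basin Q) \ K̃₂`. Hence `U` is a connected subset of `closure (basin Q) \ K̃₁`, and it
cannot meet `B` because `K₁` separates `A` from `B`.

That principal sets are nonempty uses that `Ψ` is a homeomorphism onto the basin with
holomorphic inverse: along a radius `Ψ` either has a finite limit point, which cannot lie on the
ray, or tends to `∞`, which the maximum modulus principle applied to `ζ ↦ 1 / Ψ⁻¹ (1 / ζ)`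
excludes.
-/

section InjectiveHolomorphic

variable {Ψ : ℂ → ℂ} {D : Set ℂ}

theorem Set.InjOn.not_eventually_eq {z₀ : ℂ} (hinj : InjOn Ψ D) (hz₀ : D ∈ 𝓝 z₀) :
    ¬ ∀ᶠ z in 𝓝 z₀, Ψ z = Ψ z₀ := by
  intro h
  have h' : ∀ᶠ z in 𝓝[≠] z₀, z ∈ D ∧ Ψ z = Ψ z₀ ∧ z ≠ z₀ := by
    filter_upwards [nhdsWithin_le_nhds hz₀, nhdsWithin_le_nhds h, self_mem_nhdsWithin]
      with z hzD hΨz hne using ⟨hzD, hΨz, hne⟩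
  obtain ⟨z, hzD, hΨz, hne⟩ := h'.exists
  exact hne (hinj hzD (mem_of_mem_nhds hz₀) hΨz)

theorem isOpen_image_of_injOn (hD : IsOpen D) (hd : DifferentiableOn ℂ Ψ D) (hinj : InjOn Ψ D)
    {s : Set ℂ} (hsD : s ⊆ D) (hs : IsOpen s) : IsOpen (Ψ '' s) := by
  refine isOpen_iff_mem_nhds.2 ?_
  rintro _ ⟨z, hz, rfl⟩
  have hzD := hD.mem_nhds (hsD hz)
  exact ((hd.analyticAt hzD).eventually_constant_or_nhds_le_map_nhds.resolve_left
    (hinj.not_eventually_eq hzD)) (image_mem_map (hs.mem_nhds hz))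

theorem eventually_deriv_ne_zero_of_injOn (hD : IsOpen D) (hd : DifferentiableOn ℂ Ψ D)
    (hinj : InjOn Ψ D) {z₀ : ℂ} (hz₀ : z₀ ∈ D) : ∀ᶠ z in 𝓝[≠] z₀, deriv Ψ z ≠ 0 := by
  refine ((hd.analyticOnNhd hD).deriv z₀ hz₀).eventually_eq_zero_or_eventually_ne_zero.resolve_left
    fun h => hinj.not_eventually_eq (hD.mem_nhds hz₀) ?_
  obtain ⟨ε, hε, hball⟩ := Metric.eventually_nhds_iff_ball.1 ((hD.eventually_mem hz₀).and h)
  filter_upwards [ball_mem_nhds z₀ hε] with z hz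
  exact isOpen_ball.is_const_of_deriv_eq_zero (convex_ball z₀ ε).isPreconnected
    (hd.mono fun y hy => (hball y hy).1) (fun y hy => (hball y hy).2) hz (mem_ball_self hε)

theorem continuousOn_invFunOn_of_injOn (hD : IsOpen D) (hd : DifferentiableOn ℂ Ψ D)
    (hinj : InjOn Ψ D) : ContinuousOn (Function.invFunOn Ψ D) (Ψ '' D) := by
  refine continuousOn_iff'.2 fun t ht => ⟨Ψ '' (t ∩ D),
    isOpen_image_of_injOn hD hd hinj inter_subset_right (ht.inter hD), ?_⟩
  ext w
  constructor
  · rintro ⟨hwt, z, hz, rfl⟩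
    exact ⟨⟨z, ⟨by rwa [mem_preimage, hinj.leftInvOn_invFunOn hz] at hwt, hz⟩, rfl⟩, z, hz, rfl⟩
  · rintro ⟨⟨z, ⟨hzt, hz⟩, rfl⟩, hw⟩
    exact ⟨by rwa [mem_preimage, hinj.leftInvOn_invFunOn hz], hw⟩

theorem differentiableOn_invFunOn_of_injOn (hD : IsOpen D) (hd : DifferentiableOn ℂ Ψ D)
    (hinj : InjOn Ψ D) : DifferentiableOn ℂ (Function.invFunOn Ψ D) (Ψ '' D) := by
  set f := Function.invFunOn Ψ D
  have hopen : IsOpen (Ψ '' D) := isOpen_image_of_injOn hD hd hinj subset_rfl hD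
  have hf : ContinuousOn f (Ψ '' D) := continuousOn_invFunOn_of_injOn hD hd hinj
  have hright : ∀ w ∈ Ψ '' D, Ψ (f w) = w := fun w hw => Function.invFunOn_eq hw
  have hmaps : MapsTo f (Ψ '' D) D := (surjOn_image Ψ D).mapsTo_invFunOn
  -- Away from critical points this is the inverse function theorem; the isolated critical values
  -- are removable singularities of the continuous inverse.
  have hregular : ∀ w ∈ Ψ '' D, deriv Ψ (f w) ≠ 0 → DifferentiableAt ℂ f w := fun w hw hw' =>
    ((hd.differentiableAt (hD.mem_nhds (hmaps hw))).hasDerivAt.of_local_left_inverse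
      (hf.continuousAt (hopen.mem_nhds hw)) hw'
      (eventually_of_mem (hopen.mem_nhds hw) hright)).differentiableAt
  intro w hw
  have hfw : ContinuousAt f w := hf.continuousAt (hopen.mem_nhds hw)
  have hpunct : Tendsto f (𝓝[≠] w) (𝓝[≠] f w) := by
    refine tendsto_nhdsWithin_of_tendsto_nhds_of_eventually_within _
      (hfw.tendsto.mono_left nhdsWithin_le_nhds) ?_
    filter_upwards [nhdsWithin_le_nhds (hopen.mem_nhds hw), self_mem_nhdsWithin]
      with y hy hyw hfy
    exact hyw (by rw [← hright y hy, mem_singleton_iff.1 hfy, hright w hw]; rfl)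
  have hdiff : ∀ᶠ y in 𝓝[≠] w, DifferentiableAt ℂ f y := by
    filter_upwards [nhdsWithin_le_nhds (hopen.mem_nhds hw),
      hpunct.eventually (eventually_deriv_ne_zero_of_injOn hD hd hinj (hmaps hw))]
      with y hy hy'
    exact hregular y hy hy'
  exact (Complex.analyticAt_of_differentiable_on_punctured_nhds_of_continuousAt hdiff
    hfw).differentiableAt.differentiableWithinAt

end InjectiveHolomorphic

theorem norm_circlePoint (α : AddCircle (1 : ℝ)) : ‖circlePoint α‖ = 1 :=
  Circle.norm_coe _

theorem circlePoint_injective : Function.Injective circlePoint :=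
  fun _ _ h => AddCircle.injective_toCircle one_ne_zero (Circle.coe_injective h)

-- `extRay Ψ α` is definitionally `Ψ '' radialRay α`.
def radialRay (α : AddCircle (1 : ℝ)) : Set ℂ :=
  {z | ∃ r : ℝ, 1 < r ∧ z = (r : ℂ) * circlePoint α}

theorem norm_ofReal_mul_circlePoint {r : ℝ} (hr : 0 ≤ r) (α : AddCircle (1 : ℝ)) :
    ‖(r : ℂ) * circlePoint α‖ = r := by
  rw [norm_mul, norm_circlePoint, mul_one, Complex.norm_real, Real.norm_of_nonneg hr]

theorem radialRay_subset (α : AddCircle (1 : ℝ)) : radialRay α ⊆ {z | 1 < ‖z‖} := by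
  rintro _ ⟨r, hr, rfl⟩
  rwa [mem_ofPred_eq, norm_ofReal_mul_circlePoint (by linarith)]

theorem isPreconnected_radialRay (α : AddCircle (1 : ℝ)) : IsPreconnected (radialRay α) := by
  have : radialRay α = (fun r : ℝ => (r : ℂ) * circlePoint α) '' Ioi 1 := by
    ext z
    simp only [radialRay, mem_ofPred_eq, mem_image, mem_Ioi, eq_comm (a := z)]
  rw [this]
  exact isPreconnected_Ioi.image _ (by fun_prop)

theorem eq_of_mem_radialRay {α β : AddCircle (1 : ℝ)} {z : ℂ} (hα : z ∈ radialRay α)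
    (hβ : z ∈ radialRay β) : α = β := by
  obtain ⟨r, hr, rfl⟩ := hα
  obtain ⟨s, hs, hrs⟩ := hβ
  have hnorm := congrArg norm hrs
  rw [norm_ofReal_mul_circlePoint (by linarith), norm_ofReal_mul_circlePoint (by linarith)] at hnorm
  subst hnorm
  exact circlePoint_injective (mul_left_cancel₀ (by exact_mod_cast (by linarith : r ≠ 0)) hrs)

theorem exists_seq_radialRay_tendsto (α : AddCircle (1 : ℝ)) :
    ∃ z : ℕ → ℂ, (∀ n, z n ∈ radialRay α) ∧ Tendsto z atTop (𝓝 (circlePoint α)) := by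
  refine ⟨fun n => ((1 + 1 / ((n : ℝ) + 1) : ℝ) : ℂ) * circlePoint α,
    fun n => ⟨_, lt_add_of_pos_right 1 (by positivity), rfl⟩, ?_⟩
  have h : Tendsto (fun n : ℕ => 1 + 1 / ((n : ℝ) + 1)) atTop (𝓝 1) := by
    simpa using tendsto_one_div_add_atTop_nhds_zero_nat.const_add (1 : ℝ)
  simpa using ((Complex.continuous_ofReal.tendsto 1).comp h).mul_const (circlePoint α)

section ExternalRays

variable {Ψ : ℂ → ℂ}

theorem isPreconnected_extRay (hΨ : ContinuousOn Ψ {z | 1 < ‖z‖}) (α : AddCircle (1 : ℝ)) :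
    IsPreconnected (extRay Ψ α) :=
  (isPreconnected_radialRay α).image _ (hΨ.mono (radialRay_subset α))

theorem extRay_subset {U : Set ℂ} (hΨ : MapsTo Ψ {z | 1 < ‖z‖} U) (α : AddCircle (1 : ℝ)) :
    extRay Ψ α ⊆ U :=
  (hΨ.mono_left (radialRay_subset α)).image_subset

theorem eq_of_mem_extRay (hΨ : InjOn Ψ {z | 1 < ‖z‖}) {α β : AddCircle (1 : ℝ)} {w : ℂ}
    (hα : w ∈ extRay Ψ α) (hβ : w ∈ extRay Ψ β) : α = β := by
  obtain ⟨z, hz, rfl⟩ := hα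
  obtain ⟨z', hz', hzz'⟩ := hβ
  rw [hΨ (radialRay_subset β hz') (radialRay_subset α hz) hzz'] at hz'
  exact eq_of_mem_radialRay hz hz'

end ExternalRays

theorem not_tendsto_of_mapsTo_exterior {f : ℂ → ℂ} {R : ℝ} (hR : 0 < R)
    (hf : DifferentiableOn ℂ f {w | R < ‖w‖}) (hf1 : MapsTo f {w | R < ‖w‖} {z | 1 < ‖z‖})
    {u : ℕ → ℂ} (hu : Tendsto (fun n => ‖u n‖) atTop atTop) {c : ℂ} (hc : ‖c‖ = 1) :
    ¬ Tendsto (f ∘ u) atTop (𝓝 c) := by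
  intro hfu
  -- `G ζ = 1 / f (1 / ζ)` is bounded by `1` near `0`, so it extends holomorphically to `0` with
  -- `|G 0| = 1`, contradicting the maximum modulus principle.
  set G : ℂ → ℂ := fun ζ => (f ζ⁻¹)⁻¹
  set P : Set ℂ := ball 0 R⁻¹
  have hinv : MapsTo (·⁻¹) (P \ {0}) {w | R < ‖w‖} := by
    rintro ζ ⟨hζP, hζ0⟩
    rw [mem_ball_zero_iff] at hζP
    rw [mem_ofPred_eq, norm_inv,
      lt_inv_comm₀ hR (norm_pos_iff.2 (by simpa using hζ0))]
    exact hζP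
  have hG1 : ∀ ζ ∈ P \ {0}, ‖G ζ‖ < 1 := fun ζ hζ => by
    simpa only [G, norm_inv] using inv_lt_one_of_one_lt₀ (hf1 (hinv hζ))
  have hGd : DifferentiableOn ℂ G (P \ {0}) :=
    ((hf.comp (differentiableOn_inv.mono fun ζ hζ => by simpa using hζ.2) hinv).inv
      fun ζ hζ => norm_pos_iff.1 (one_pos.trans (hf1 (hinv hζ))))
  set F := Function.update G 0 (limUnder (𝓝[≠] 0) G)
  have hFd : DifferentiableOn ℂ F P :=
    Complex.differentiableOn_update_limUnder_of_bddAbove (ball_mem_nhds 0 (inv_pos.2 hR)) hGd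
      ⟨1, by rintro _ ⟨ζ, hζ, rfl⟩; exact (hG1 ζ hζ).le⟩
  have hu0 : Tendsto (fun n => (u n)⁻¹) atTop (𝓝 0) := by
    simpa [tendsto_zero_iff_norm_tendsto_zero] using hu.inv_tendsto_atTop
  have huP : ∀ᶠ n in atTop, (u n)⁻¹ ∈ P \ {0} := by
    filter_upwards [hu0 (ball_mem_nhds 0 (inv_pos.2 hR)), hu.eventually_gt_atTop 0]
      with n hnP hn0
    exact ⟨hnP, by simpa using norm_pos_iff.1 hn0⟩
  have hFG : ∀ ζ ∈ P \ {0}, F ζ = G ζ := fun ζ hζ => Function.update_of_ne hζ.2 _ _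
  have hF0 : F 0 = c⁻¹ := by
    refine tendsto_nhds_unique
      ((hFd.continuousOn.continuousAt (ball_mem_nhds 0 (inv_pos.2 hR))).tendsto.comp hu0) ?_
    refine (hfu.inv₀ (ne_zero_of_norm_ne_zero (hc ▸ one_ne_zero))).congr' ?_
    filter_upwards [huP] with n hn
    simp [hFG _ hn, G]
  have hmax : IsMaxOn (norm ∘ F) P 0 := fun ζ hζ => by
    by_cases hζ0 : ζ = 0
    · simp [hζ0]
    · simpa [hF0, hc, hFG ζ ⟨hζ, hζ0⟩] using (hG1 ζ ⟨hζ, hζ0⟩).le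
  obtain ⟨n, hn⟩ := huP.exists
  have h1 := Complex.norm_eqOn_of_isPreconnected_of_isMaxOn (convex_ball _ _).isPreconnected
    isOpen_ball hFd (mem_ball_self (inv_pos.2 hR)) hmax hn.1
  simp only [Function.comp_apply, Function.const_apply, hF0, norm_inv, hc, inv_one,
    hFG _ hn] at h1
  exact (hG1 _ hn).ne h1

section PrincipalSet

variable {Ψ : ℂ → ℂ}

theorem isOpen_exteriorDisk : IsOpen {z : ℂ | 1 < ‖z‖} :=
  isOpen_lt continuous_const continuous_norm

theorem mem_principalSet_of_tendsto (hd : DifferentiableOn ℂ Ψ {z | 1 < ‖z‖})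
    (hinj : InjOn Ψ {z | 1 < ‖z‖}) {α : AddCircle (1 : ℝ)} {z : ℕ → ℂ}
    (hz : ∀ n, z n ∈ radialRay α) (hzα : Tendsto z atTop (𝓝 (circlePoint α)))
    {w : ℂ} (hw : Tendsto (Ψ ∘ z) atTop (𝓝 w)) : w ∈ principalSet Ψ α := by
  refine ⟨mem_closure_of_tendsto hw (.of_forall fun n => mem_image_of_mem Ψ (hz n)), ?_⟩
  rintro ⟨v, hv, rfl⟩
  have hvD := radialRay_subset α hv
  -- `Ψ⁻¹` is continuous at `Ψ v`, so `z n = Ψ⁻¹ (Ψ (z n)) → v`, which lies on the unit circle.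
  have hf : ContinuousAt (Function.invFunOn Ψ {z | 1 < ‖z‖}) (Ψ v) :=
    (continuousOn_invFunOn_of_injOn isOpen_exteriorDisk hd hinj).continuousAt
      ((isOpen_image_of_injOn isOpen_exteriorDisk hd hinj subset_rfl isOpen_exteriorDisk).mem_nhds
        (mem_image_of_mem Ψ hvD))
  have hzv : Tendsto z atTop (𝓝 v) := by
    rw [← hinj.leftInvOn_invFunOn hvD]
    exact (hf.tendsto.comp hw).congr fun n => hinj.leftInvOn_invFunOn (radialRay_subset α (hz n))
  have hvD' : 1 < ‖v‖ := hvD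
  rw [tendsto_nhds_unique hzv hzα, norm_circlePoint] at hvD'
  exact lt_irrefl 1 hvD'

theorem principalSet_nonempty (hd : DifferentiableOn ℂ Ψ {z | 1 < ‖z‖})
    (hinj : InjOn Ψ {z | 1 < ‖z‖}) {R : ℝ} (hR : 0 < R)
    (hext : {w | R < ‖w‖} ⊆ Ψ '' {z | 1 < ‖z‖}) (α : AddCircle (1 : ℝ)) :
    (principalSet Ψ α).Nonempty := by
  obtain ⟨z, hz, hzα⟩ := exists_seq_radialRay_tendsto α
  by_cases hbig : Tendsto (fun n => ‖Ψ (z n)‖) atTop atTop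
  · refine absurd ?_ (not_tendsto_of_mapsTo_exterior hR
      ((differentiableOn_invFunOn_of_injOn isOpen_exteriorDisk hd hinj).mono hext)
      ((surjOn_image Ψ _).mapsTo_invFunOn.mono_left hext) hbig (norm_circlePoint α))
    exact hzα.congr fun n => (hinj.leftInvOn_invFunOn (radialRay_subset α (hz n))).symm
  · simp only [Filter.tendsto_atTop, not_forall, not_eventually, not_le] at hbig
    obtain ⟨M, hM⟩ := hbig
    obtain ⟨w, -, φ, hφ, hw⟩ := tendsto_subseq_of_frequently_bounded
      (isBounded_ball (x := 0) (r := M)) (x := Ψ ∘ z) (hM.mono fun n hn => mem_ball_zero_iff.2 hn)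
    exact ⟨w, mem_principalSet_of_tendsto hd hinj (fun n => hz (φ n))
      (hzα.comp hφ.tendsto_atTop) hw⟩

end PrincipalSet

theorem mem_basin_of_norm_lt {Q : Set ℂ} {R : ℝ} (hR : 0 ≤ R) (hQ : Q ⊆ closedBall 0 R) {w : ℂ}
    (hw : R < ‖w‖) : w ∈ basin Q := by
  have hw0 : 0 < ‖w‖ := hR.trans_lt hw
  have hray : ∀ t : ℝ, 1 ≤ t → t • w ∉ Q := fun t ht htQ => by
    have := mem_closedBall_zero_iff.1 (hQ htQ)
    rw [norm_smul, Real.norm_of_nonneg (by linarith)] at this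
    nlinarith
  -- the half-line `{t w : t ≥ 1}` is an unbounded connected subset of `ℂ ∖ Q` through `w`
  have hsub : (· • w) '' Ici (1 : ℝ) ⊆ connectedComponentIn Qᶜ w :=
    (isPreconnected_Ici.image _ (by fun_prop)).subset_connectedComponentIn
      ⟨1, self_mem_Ici, one_smul ℝ w⟩ (by rintro _ ⟨t, ht, rfl⟩; exact hray t ht)
  refine ⟨by simpa using hray 1 le_rfl, fun hb => ?_⟩
  obtain ⟨C, hC⟩ := isBounded_iff_forall_norm_le.1 (hb.subset hsub)
  have := hC _ ⟨1 + |C| / ‖w‖, le_add_of_nonneg_right (by positivity : (0 : ℝ) ≤ |C| / ‖w‖), rfl⟩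
  rw [norm_smul, Real.norm_of_nonneg (by positivity), add_mul, one_mul,
    div_mul_cancel₀ _ hw0.ne'] at this
  linarith [le_abs_self C]

theorem RiemannMap.principalSet_nonempty {Q : Set ℂ} {Ψ : ℂ → ℂ} (hQ : Bornology.IsBounded Q)
    (hΨ : RiemannMap Q Ψ) (α : AddCircle (1 : ℝ)) : (principalSet Ψ α).Nonempty := by
  obtain ⟨R, hR⟩ := hQ.subset_closedBall 0
  refine _root_.principalSet_nonempty hΨ.1 hΨ.2.injOn (zero_lt_one.trans_le (le_max_right R 1))
    (fun w hw => ?_) α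
  rw [hΨ.2.image_eq]
  exact mem_basin_of_norm_lt (zero_le_one.trans (le_max_right R 1))
    (hR.trans (closedBall_subset_closedBall (le_max_left R 1))) hw

theorem mem_connectedComponentIn_of_mem_closure {X : Type*} [TopologicalSpace X] {F : Set X}
    {x p : X} (hp : p ∈ F) (hpx : p ∈ closure (connectedComponentIn F x)) :
    p ∈ connectedComponentIn F x := by
  have hx : x ∈ F := by
    by_contra hx
    rw [connectedComponentIn_eq_empty hx, closure_empty] at hpx
    exact hpx
  have hpre : IsPreconnected (insert p (connectedComponentIn F x)) :=
    isPreconnected_connectedComponentIn.subset_closure (subset_insert _ _)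
      (insert_subset hpx subset_closure)
  exact hpre.subset_connectedComponentIn (mem_insert_of_mem _ (mem_connectedComponentIn hx))
    (insert_subset hp (connectedComponentIn_subset _ _)) (mem_insert _ _)

namespace RayCompactum

variable {Q : Set ℂ} {Ψ : ℂ → ℂ}

theorem extRay_subset_diff_tilde (hΨ : RiemannMap Q Ψ) (C : RayCompactum Q Ψ)
    {α : AddCircle (1 : ℝ)} (hα : α ∉ C.angles) : extRay Ψ α ⊆ closure (basin Q) \ C.tilde := by
  intro w hw
  have hwb := extRay_subset hΨ.2.mapsTo α hw
  refine ⟨subset_closure hwb, ?_⟩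
  rintro (hwC | hwR)
  · exact hwb.1 (C.carrier_subset hwC)
  · obtain ⟨β, hβ, hwβ⟩ := mem_iUnion₂.1 hwR
    exact hα (eq_of_mem_extRay hΨ.2.injOn hw hwβ ▸ hβ)

theorem mem_diff_tilde (hQ : Q ⊆ closure (basin Q)) (hΨ : MapsTo Ψ {z | 1 < ‖z‖} (basin Q))
    (C : RayCompactum Q Ψ) {p : ℂ} (hpQ : p ∈ Q) (hpC : p ∉ C.carrier) :
    p ∈ closure (basin Q) \ C.tilde := by
  refine ⟨hQ hpQ, ?_⟩
  rintro (hpC' | hpR)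
  · exact hpC hpC'
  · obtain ⟨β, -, hpβ⟩ := mem_iUnion₂.1 hpR
    exact (extRay_subset hΨ β hpβ).1 hpQ

theorem inter_carrier_nonempty_of_inter_tilde_nonempty (hQb : Bornology.IsBounded Q)
    (hQ : Q ⊆ closure (basin Q)) (hΨ : RiemannMap Q Ψ) {C₁ C₂ : RayCompactum Q Ψ}
    (hC : Disjoint C₁.carrier C₂.carrier) {z : ℂ}
    (h : (connectedComponentIn (closure (basin Q) \ C₂.tilde) z ∩ C₁.tilde).Nonempty) :
    (connectedComponentIn (closure (basin Q) \ C₂.tilde) z ∩ C₁.carrier).Nonempty := by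
  obtain ⟨w, hwU, hwC | hwR⟩ := h
  · exact ⟨w, hwU, hwC⟩
  obtain ⟨α, hα, hwα⟩ := mem_iUnion₂.1 hwR
  have hα₂ : α ∉ C₂.angles := fun hα₂ =>
    (connectedComponentIn_subset _ _ hwU).2 (Or.inr (mem_iUnion₂.2 ⟨α, hα₂, hwα⟩))
  have hray : extRay Ψ α ⊆ connectedComponentIn (closure (basin Q) \ C₂.tilde) z := by
    rw [connectedComponentIn_eq hwU]
    exact (isPreconnected_extRay hΨ.1.continuousOn α).subset_connectedComponentIn hwα
      (C₂.extRay_subset_diff_tilde hΨ hα₂)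
  obtain ⟨p, hp⟩ := hΨ.principalSet_nonempty hQb α
  have hpC₁ := C₁.principal_subset α hα hp
  exact ⟨p, mem_connectedComponentIn_of_mem_closure
    (C₂.mem_diff_tilde hQ hΨ.2.mapsTo (C₁.carrier_subset hpC₁) (hC.notMem_of_mem_left hpC₁))
    (closure_mono hray hp.1), hpC₁⟩

end RayCompactum

theorem raySeparates_of_raySeparates_middle_general (Q : Set ℂ) (hQ : Unshielded Q)
    (Ψ : ℂ → ℂ) (hΨ : RiemannMap Q Ψ)
    (A B : Set ℂ)
    (K₁ K₂ : RayCompactum Q Ψ)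
    (h₁ : RaySeparates K₁ A B)
    (h₂B : Disjoint K₂.carrier B)
    (h₂ : RaySeparates K₂ A K₁.carrier) :
    RaySeparates K₂ A B := by
  obtain ⟨h₂A, h₂sep⟩ := h₂
  have hQcl : Q ⊆ closure (basin Q) := hQ.2.2.subset.trans frontier_subset_closure
  have hK : Disjoint K₁.carrier K₂.carrier := disjoint_iff_inter_eq_empty.2 <| by
    rw [inter_comm]
    exact subset_eq_empty (inter_subset_inter_right _ subset_union_right) h₂A
  refine ⟨?_, fun z hz ⟨hzA, hzB⟩ => ?_⟩
  · rw [inter_union_distrib_left, h₂B.inter_eq, union_empty]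
    exact subset_eq_empty (inter_subset_inter_right _ subset_union_left) h₂A
  have hU : connectedComponentIn (closure (basin Q) \ K₂.tilde) z ⊆
      closure (basin Q) \ K₁.tilde := fun y hy =>
    ⟨(connectedComponentIn_subset _ _ hy).1, fun hy' => h₂sep z hz ⟨hzA,
      RayCompactum.inter_carrier_nonempty_of_inter_tilde_nonempty hQ.1.isBounded hQcl hΨ hK
        ⟨y, hy, hy'⟩⟩⟩
  obtain ⟨a, haU, haA⟩ := hzA
  have hUa := isPreconnected_connectedComponentIn.subset_connectedComponentIn haU hU
  exact h₁.2 a (hU haU) ⟨⟨a, mem_connectedComponentIn (hU haU), haA⟩,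
    hzB.mono (inter_subset_inter_left _ hUa)⟩

/-- If a ray-compactum `K₁` ray-separates `A` and `B`, and a ray-compactum `K₂`
disjoint from `B` ray-separates `A` and `K₁`, then `K₂` ray-separates `A` and `B`. -/
theorem raySeparates_of_raySeparates_middle (Q : Set ℂ) (hQ : Unshielded Q)
    (Ψ : ℂ → ℂ) (hΨ : RiemannMap Q Ψ)
    (A B : Set ℂ) (hA : A ⊆ Q) (hB : B ⊆ Q)
    (K₁ K₂ : RayCompactum Q Ψ)
    (h₁ : RaySeparates K₁ A B)
    (h₂B : Disjoint K₂.carrier B)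
    (h₂ : RaySeparates K₂ A K₁.carrier) :
    RaySeparates K₂ A B :=
  raySeparates_of_raySeparates_middle_general Q hQ Ψ hΨ A B K₁ K₂ h₁ h₂B h₂

end
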